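/- Let Δ = Δ_0 + Δ_1 + ⋯ + Δ_k be a Minkowski sum decomposition of a reflexive polytope Δ ⊂ ℝ^d into lattice polytopes, σ̄∨ ⊂ ℝ^d ⊕ ℝ^{k+1} the dual of the Cayley cone, n_σ̄ = r_0* + ⋯ + r_k* and m_{σ̄∨} = r_0 + ⋯ + r_k. Then: (i) the linear map from the hyperplane m_{σ̄∨}^⊥ ⊂ ℝ^d ⊕ ℝ^{k+1} to ℝ^d ⊕ ℝ^k sending (n, α_0, …, α_k) to (n, α_1, …, α_k) maps σ̄∨_{(k+1)} − n_σ̄ bijectively onto (k+1)·Conv({u − Σ_{i=1}^k min⟨Δ_i,u⟩ e_i* : u ∈ Δ*} ∪ {e_1*, …, e_k*}) − (e_1* + ⋯ + e_k*), where σ̄∨_{(k+1)} = {y ∈ σ̄∨ : ⟨m_{σ̄∨}, y⟩ = k+1}; and (ii) the linear map π : ℝ^d ⊕ ℝ^{k+1} → ℝ^d ⊕ ℝ^k sending (n, α_0, …, α_k) to (n, α_1 − α_0, …, α_k − α_0) satisfies π(σ̄∨_{(1)}) = Conv({u − Σ_{i=0}^k min⟨Δ_i,u⟩ e_i* : u ∈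 Δ*} ∪ {e_0*, e_1*, …, e_k*}), where σ̄∨_{(1)} = {y ∈ σ̄∨ : ⟨m_{σ̄∨}, y⟩ = 1} and e_0* := −(e_1* + ⋯ + e_k*). -/

import Mathlib

open scoped Pointwise
open Set

noncomputable section

/-- The standard pairing on `ℝ^n`. -/
def pairing {n : ℕ} (x y : Fin n → ℝ) : ℝ := ∑ i, x i * y i

/-- A point of `ℝ^n` lying in the lattice `ℤ^n`. -/
def IsLatticePt {n : ℕ} (x : Fin n → ℝ) : Prop := ∀ i, ∃ z : ℤ, x i = (z : ℝ)

/-- A lattice polytope: the convex hull of finitely many lattice points. -/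
def IsLatticePolytope {n : ℕ} (P : Set (Fin n → ℝ)) : Prop :=
  ∃ S : Set (Fin n → ℝ), S.Finite ∧ (∀ x ∈ S, IsLatticePt x) ∧ P = convexHull ℝ S

/-- The dual polytope `P* = {y | ⟨x,y⟩ ≥ -1 ∀ x ∈ P}`. -/
def polarDual {n : ℕ} (P : Set (Fin n → ℝ)) : Set (Fin n → ℝ) :=
  {y | ∀ x ∈ P, -1 ≤ pairing x y}

/-- A reflexive polytope. -/
def IsReflexive {n : ℕ} (P : Set (Fin n → ℝ)) : Prop :=
  IsLatticePolytope P ∧ (0 : Fin n → ℝ) ∈ interior P ∧ IsLatticePolytope (polarDual P)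

/-- `min⟨P, u⟩ = min_{x ∈ P} ⟨x, u⟩`. -/
def minPair {n : ℕ} (P : Set (Fin n → ℝ)) (u : Fin n → ℝ) : ℝ :=
  sInf ((fun x => pairing x u) '' P)

/-- The real vector space `ℝ^d ⊕ ℝ^k`. -/
abbrev Vdk (d k : ℕ) := (Fin d → ℝ) × (Fin k → ℝ)

/-- The pairing on `ℝ^d ⊕ ℝ^k` (sum of the two standard pairings). -/
def pairingV {d k : ℕ} (x y : Vdk d k) : ℝ := pairing x.1 y.1 + pairing x.2 y.2

def IsLatticePtV {d k : ℕ} (x : Vdk d k) : Prop := IsLatticePt x.1 ∧ IsLatticePt x.2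

def IsLatticePolytopeV {d k : ℕ} (P : Set (Vdk d k)) : Prop :=
  ∃ S : Set (Vdk d k), S.Finite ∧ (∀ x ∈ S, IsLatticePtV x) ∧ P = convexHull ℝ S

def polarDualV {d k : ℕ} (P : Set (Vdk d k)) : Set (Vdk d k) :=
  {y | ∀ x ∈ P, -1 ≤ pairingV x y}

def IsReflexiveV {d k : ℕ} (P : Set (Vdk d k)) : Prop :=
  IsLatticePolytopeV P ∧ (0 : Vdk d k) ∈ interior P ∧ IsLatticePolytopeV (polarDualV P)

/-- The Cayley cone `σ̄ = {(t₀Δ₀ + ⋯ + t_kΔ_k, t₀, …, t_k) : tᵢ ≥ 0} ⊆ ℝ^d ⊕ ℝ^{k+1}`. -/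
def cayleyCone {d k : ℕ} (Δ : Fin (k+1) → Set (Fin d → ℝ)) : Set (Vdk d (k+1)) :=
  {p | (∀ i, 0 ≤ p.2 i) ∧ p.1 ∈ ∑ i, p.2 i • Δ i}

/-- The dual cone of a cone in `ℝ^d ⊕ ℝ^k`. -/
def dualConeV {d k : ℕ} (σ : Set (Vdk d k)) : Set (Vdk d k) :=
  {y | ∀ x ∈ σ, 0 ≤ pairingV x y}

/-- `e₀* = −(e₁* + ⋯ + e_k*)`, `eᵢ*` the standard basis of the second factor `ℝ^k`. -/
def estar {k : ℕ} : Fin (k+1) → Fin k → ℝ :=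
  Fin.cases (fun _ => -1) (fun i => Pi.single i 1)

/-!
The dual cone `σ̄∨` is cut out by the inequalities `min⟨Δᵢ, n⟩ + αᵢ ≥ 0`, and its truncation
`{∑ αᵢ ≤ 1}` is the convex hull of the points `(u, -min⟨Δ₀,u⟩, …, -min⟨Δ_k,u⟩)`, `u ∈ Δ*`, and of
`r₀, …, r_k`: a point `(n, α)` of it equals `λ (u, -min⟨Δ_•,u⟩) + ∑ sᵢ rᵢ` with
`λ = -min⟨Δ,n⟩ = -∑ min⟨Δᵢ,n⟩`, `n = λ u` and `sᵢ = min⟨Δᵢ,n⟩ + αᵢ ≥ 0`, of total weight `∑ αᵢ ≤ 1`.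
Both maps of the theorem kill a vector `(0, w)` with `w ≥ 0` and `∑ wᵢ = 1`
(`w = r₀`, resp. `w = (r₀ + ⋯ + r_k)/(k+1)`); adding a multiple of it moves the truncation into the
slice `σ̄∨_{(1)}`, so both sets have the same image. Linear maps commute with convex hulls, so it
remains to compute the images of the generators. Part (i) then follows by scaling, since
`σ̄∨_{(k+1)} = (k+1) σ̄∨_{(1)}` and forgetting `α₀` is injective on each slice.
-/

lemma pairing_eq_dotProduct {n : ℕ} (x y : Fin n → ℝ) : pairing x y = x ⬝ᵥ y := rfl

lemma IsLatticePolytope.isCompact {n : ℕ} {P : Set (Fin n → ℝ)} (h : IsLatticePolytope P) :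
    IsCompact P := by
  obtain ⟨S, hS, -, rfl⟩ := h
  exact hS.isCompact_convexHull ℝ

section minPair

variable {n : ℕ} {P : Set (Fin n → ℝ)}

lemma minPair_isLeast (hP : IsCompact P) (hne : P.Nonempty) (u : Fin n → ℝ) :
    IsLeast ((fun x => pairing x u) '' P) (minPair P u) := by
  obtain ⟨a, ha⟩ := (hP.image (f := fun x => pairing x u)
    (continuous_id.dotProduct continuous_const)).exists_isLeast (hne.image _)
  rwa [minPair, ha.csInf_eq]

lemma minPair_le (hP : IsCompact P) (hne : P.Nonempty) {x : Fin n → ℝ} (hx : x ∈ P)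
    (u : Fin n → ℝ) : minPair P u ≤ pairing x u :=
  (minPair_isLeast hP hne u).2 ⟨x, hx, rfl⟩

lemma exists_pairing_eq_minPair (hP : IsCompact P) (hne : P.Nonempty) (u : Fin n → ℝ) :
    ∃ x ∈ P, pairing x u = minPair P u :=
  (minPair_isLeast hP hne u).1

lemma minPair_zero (hne : P.Nonempty) : minPair P 0 = 0 := by
  simp [minPair, pairing_eq_dotProduct, hne.image_const]

lemma minPair_smul {c : ℝ} (hc : 0 ≤ c) (u : Fin n → ℝ) :
    minPair P (c • u) = c * minPair P u := by
  have himage : (fun x => pairing x (c • u)) '' P = c • (fun x => pairing x u) '' P := by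
    rw [← Set.image_smul, Set.image_image]
    simp [pairing_eq_dotProduct, dotProduct_smul]
  rw [minPair, himage, Real.sInf_smul_of_nonneg hc, smul_eq_mul, minPair]

lemma minPair_neg_of_zero_mem_interior (hP : IsCompact P) (h0 : (0 : Fin n → ℝ) ∈ interior P)
    {u : Fin n → ℝ} (hu : u ≠ 0) : minPair P u < 0 := by
  have hlim : Filter.Tendsto (fun t : ℝ => -(t • u)) (nhdsWithin 0 (Ioi 0)) (nhds 0) := by
    simpa using ((continuous_id.smul continuous_const).neg.tendsto (0 : ℝ)).mono_left
      nhdsWithin_le_nhds (f := fun t : ℝ => -(t • u))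
  obtain ⟨t, ht, htP⟩ := (eventually_mem_nhdsWithin.and
    (hlim.eventually (mem_interior_iff_mem_nhds.mp h0))).exists
  have huu : 0 < u ⬝ᵥ u := by simpa using Matrix.dotProduct_self_star_pos_iff.mpr hu
  calc minPair P u ≤ pairing (-(t • u)) u := minPair_le hP ⟨_, htP⟩ htP u
    _ = -(t * (u ⬝ᵥ u)) := by simp [pairing_eq_dotProduct]
    _ < 0 := by have := mul_pos ht huu; linarith

lemma mem_polarDual_iff (hP : IsCompact P) (hne : P.Nonempty) (u : Fin n → ℝ) :
    u ∈ polarDual P ↔ -1 ≤ minPair P u := by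
  refine ⟨fun hu => ?_, fun hu x hx => hu.trans (minPair_le hP hne hx u)⟩
  obtain ⟨x, hx, hx'⟩ := exists_pairing_eq_minPair hP hne u
  exact hx' ▸ hu x hx

lemma zero_mem_polarDual (P : Set (Fin n → ℝ)) : (0 : Fin n → ℝ) ∈ polarDual P := by
  intro x _
  simp [pairing_eq_dotProduct]

lemma exists_mem_polarDual_smul_eq (hP : IsCompact P) (h0 : (0 : Fin n → ℝ) ∈ interior P)
    (v : Fin n → ℝ) : ∃ u ∈ polarDual P, (-minPair P v) • u = v := by
  rcases eq_or_ne v 0 with rfl | hv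
  · exact ⟨0, zero_mem_polarDual P, smul_zero _⟩
  have hpos : 0 < -minPair P v := neg_pos.mpr (minPair_neg_of_zero_mem_interior hP h0 hv)
  refine ⟨(-minPair P v)⁻¹ • v, ?_, smul_inv_smul₀ hpos.ne' v⟩
  rw [mem_polarDual_iff hP ⟨0, interior_subset h0⟩, minPair_smul (inv_nonneg.mpr hpos.le),
    inv_neg, neg_mul, inv_mul_cancel₀ (neg_ne_zero.mp hpos.ne')]

end minPair

section sums

variable {n : ℕ} {ι : Type*} [Fintype ι] {Δ : ι → Set (Fin n → ℝ)}

lemma nonempty_of_sum_nonempty (h : (∑ i, Δ i).Nonempty) (i : ι) : (Δ i).Nonempty := by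
  obtain ⟨x, hx⟩ := h
  obtain ⟨g, hg, -⟩ := (Set.mem_fintype_sum _ _).mp hx
  exact ⟨g i, hg i⟩

lemma minPair_sum (hc : ∀ i, IsCompact (Δ i)) (hne : ∀ i, (Δ i).Nonempty) (u : Fin n → ℝ) :
    minPair (∑ i, Δ i) u = ∑ i, minPair (Δ i) u := by
  refine IsLeast.csInf_eq ⟨?_, ?_⟩
  · choose g hg hg' using fun i => exists_pairing_eq_minPair (hc i) (hne i) u
    refine ⟨∑ i, g i, (Set.mem_fintype_sum _ _).mpr ⟨g, hg, rfl⟩, ?_⟩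
    simp only [pairing_eq_dotProduct, sum_dotProduct] at hg' ⊢
    exact Finset.sum_congr rfl fun i _ => hg' i
  · rintro _ ⟨x, hx, rfl⟩
    obtain ⟨g, hg, rfl⟩ := (Set.mem_fintype_sum _ _).mp hx
    simp only [pairing_eq_dotProduct, sum_dotProduct]
    exact Finset.sum_le_sum fun i _ => minPair_le (hc i) (hne i) (hg i) u

end sums

lemma Convex.sum_smul_mem_of_zero_mem {E ι : Type*} [AddCommGroup E] [Module ℝ E] [Fintype ι]
    {s : Set E} (hs : Convex ℝ s) (h0 : 0 ∈ s) {w : ι → ℝ} {z : ι → E} (hw : ∀ i, 0 ≤ w i)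
    (hsum : ∑ i, w i ≤ 1) (hz : ∀ i, z i ∈ s) : ∑ i, w i • z i ∈ s := by
  have := hs.sum_mem (t := Finset.univ) (w := fun j : Option ι => j.elim (1 - ∑ i, w i) w)
    (z := fun j => j.elim 0 z) (by rintro (_ | i) - <;> simp [hw, hsum])
    (by simp [Fintype.sum_option]) (by rintro (_ | i) - <;> simp [h0, hz])
  simpa [Fintype.sum_option] using this

section dualCone

variable {d m : ℕ}

lemma pairingV_add_right (x y z : Vdk d m) : pairingV x (y + z) = pairingV x y + pairingV x z := by
  simp only [pairingV, pairing_eq_dotProduct, Prod.fst_add, Prod.snd_add, dotProduct_add]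
  ring

lemma pairingV_smul_right (c : ℝ) (x y : Vdk d m) : pairingV x (c • y) = c * pairingV x y := by
  simp only [pairingV, pairing_eq_dotProduct, Prod.smul_fst, Prod.smul_snd, dotProduct_smul,
    smul_eq_mul]
  ring

lemma pairingV_zero_one (y : Vdk d m) :
    pairingV (((0 : Fin d → ℝ), fun _ => 1) : Vdk d m) y = ∑ i, y.2 i := by
  simp [pairingV, pairing_eq_dotProduct, dotProduct]

variable {σ : Set (Vdk d m)}

lemma add_mem_dualConeV {y z : Vdk d m} (hy : y ∈ dualConeV σ) (hz : z ∈ dualConeV σ) :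
    y + z ∈ dualConeV σ := fun x hx => by
  rw [pairingV_add_right]
  exact add_nonneg (hy x hx) (hz x hx)

lemma smul_mem_dualConeV {c : ℝ} (hc : 0 ≤ c) {y : Vdk d m} (hy : y ∈ dualConeV σ) :
    c • y ∈ dualConeV σ := fun x hx => by
  rw [pairingV_smul_right]
  exact mul_nonneg hc (hy x hx)

lemma convex_dualConeV : Convex ℝ (dualConeV σ) := fun _ hy _ hz _ _ ha hb _ =>
  add_mem_dualConeV (smul_mem_dualConeV ha hy) (smul_mem_dualConeV hb hz)

/-- `σ∨_{(c)}`, with `⟨m_σ∨, y⟩ = ∑ i, y.2 i` for `m_σ∨ = r₀ + ⋯ + r_{m-1}`. -/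
def dualSlice (σ : Set (Vdk d m)) (c : ℝ) : Set (Vdk d m) :=
  {y ∈ dualConeV σ | ∑ i, y.2 i = c}

lemma smul_dualSlice_one {c : ℝ} (hc : 0 < c) : c • dualSlice σ 1 = dualSlice σ c := by
  ext y
  rw [Set.mem_smul_set_iff_inv_smul_mem₀ hc.ne']
  refine ⟨fun ⟨hy, hsum⟩ => ⟨?_, ?_⟩, fun ⟨hy, hsum⟩ => ⟨smul_mem_dualConeV (by positivity) hy, ?_⟩⟩
  · simpa [hc.ne'] using smul_mem_dualConeV hc.le hy
  · simp only [Prod.smul_snd, Pi.smul_apply, smul_eq_mul, ← Finset.mul_sum] at hsum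
    field_simp at hsum
    linarith
  · simp [← Finset.mul_sum, hsum, hc.ne']

end dualCone

section cayley

variable {d k : ℕ} {Δ : Fin (k+1) → Set (Fin d → ℝ)}

lemma mem_dualConeV_cayleyCone_iff (hc : ∀ i, IsCompact (Δ i)) (hne : ∀ i, (Δ i).Nonempty)
    (y : Vdk d (k+1)) :
    y ∈ dualConeV (cayleyCone Δ) ↔ ∀ i, 0 ≤ minPair (Δ i) y.1 + y.2 i := by
  constructor
  · intro hy i
    obtain ⟨x, hx, hx'⟩ := exists_pairing_eq_minPair (hc i) (hne i) y.1
    have hmem : ((x, Pi.single i 1) : Vdk d (k+1)) ∈ cayleyCone Δ := by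
      refine ⟨fun j => by by_cases hji : j = i <;> simp [hji], ?_⟩
      rw [Set.mem_fintype_sum]
      refine ⟨Pi.single i x, fun j => ?_, by simp⟩
      rcases eq_or_ne j i with rfl | hji
      · simpa using hx
      · simp [hji, Set.zero_smul_set (hne j)]
    simpa [pairingV, hx', pairing_eq_dotProduct] using hy _ hmem
  · rintro hy p ⟨ht, hx⟩
    obtain ⟨g, hg, hgsum⟩ := (Set.mem_fintype_sum _ _).mp hx
    have hterm : ∀ i, p.2 i * (minPair (Δ i) y.1 + y.2 i) ≤ pairing (g i) y.1 + p.2 i * y.2 i := by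
      intro i
      obtain ⟨z, hz, hz'⟩ := Set.mem_smul_set.mp (hg i)
      rw [← hz', pairing_eq_dotProduct, smul_dotProduct, smul_eq_mul, mul_add]
      gcongr
      exacts [ht i, minPair_le (hc i) (hne i) hz y.1]
    calc (0 : ℝ) ≤ ∑ i, p.2 i * (minPair (Δ i) y.1 + y.2 i) :=
          Finset.sum_nonneg fun i _ => mul_nonneg (ht i) (hy i)
      _ ≤ ∑ i, (pairing (g i) y.1 + p.2 i * y.2 i) := Finset.sum_le_sum fun i _ => hterm i
      _ = pairingV p y := by
        rw [Finset.sum_add_distrib, pairingV, ← hgsum, pairing_eq_dotProduct, sum_dotProduct]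
        rfl

lemma zero_prod_mem_dualConeV_cayleyCone {w : Fin (k+1) → ℝ} (hw : 0 ≤ w) :
    ((0 : Fin d → ℝ), w) ∈ dualConeV (cayleyCone Δ) := fun x hx => by
  simpa [pairingV, pairing_eq_dotProduct, dotProduct] using
    Finset.sum_nonneg fun i _ => mul_nonneg (hx.1 i) (hw i)

def cayleyGenerators (Δ : Fin (k+1) → Set (Fin d → ℝ)) : Set (Vdk d (k+1)) :=
  (fun u => ((u, fun i => -minPair (Δ i) u) : Vdk d (k+1))) '' polarDual (∑ i, Δ i) ∪
    ⋃ i, {(((0 : Fin d → ℝ), Pi.single i 1) : Vdk d (k+1))}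

theorem convexHull_cayleyGenerators (hc : ∀ i, IsCompact (Δ i))
    (hΔ : IsCompact (∑ i, Δ i)) (h0 : (0 : Fin d → ℝ) ∈ interior (∑ i, Δ i)) :
    convexHull ℝ (cayleyGenerators Δ) = {y ∈ dualConeV (cayleyCone Δ) | ∑ i, y.2 i ≤ 1} := by
  have hsne : (∑ i, Δ i).Nonempty := ⟨0, interior_subset h0⟩
  have hne := nonempty_of_sum_nonempty hsne
  have hconvex : Convex ℝ {y ∈ dualConeV (cayleyCone Δ) | ∑ i, y.2 i ≤ 1} :=
    convex_dualConeV.inter <| convex_halfSpace_le (f := fun y : Vdk d (k+1) => ∑ i, y.2 i)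
      ⟨fun x y => Finset.sum_add_distrib, fun c x => (Finset.mul_sum _ _ _).symm⟩ 1
  apply (convexHull_min _ hconvex).antisymm
  · rintro y ⟨hy, hsum⟩
    rw [mem_dualConeV_cayleyCone_iff hc hne] at hy
    obtain ⟨u, hu, hlu⟩ := exists_mem_polarDual_smul_eq hΔ h0 y.1
    set l := -minPair (∑ i, Δ i) y.1
    have hl : 0 ≤ l := neg_nonneg.mpr <| by
      simpa [pairing_eq_dotProduct] using minPair_le hΔ hsne (interior_subset h0) y.1
    have hmin : ∀ i, minPair (Δ i) y.1 = l * minPair (Δ i) u := by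
      intro i; rw [← minPair_smul hl, hlu]
    have hrep : y = ∑ j : Option (Fin (k+1)),
        (j.elim l fun i => minPair (Δ i) y.1 + y.2 i) •
          j.elim ((u, fun i => -minPair (Δ i) u) : Vdk d (k+1))
            fun i => ((0 : Fin d → ℝ), Pi.single i 1) := by
      ext
      · simp [Fintype.sum_option, Prod.fst_sum, hlu]
      · simp [Fintype.sum_option, Prod.snd_sum, Finset.sum_apply, Pi.single_apply, hmin]
    rw [hrep]
    refine (convex_convexHull ℝ _).sum_smul_mem_of_zero_mem ?_ ?_ ?_ ?_
    · exact subset_convexHull ℝ _ <| Or.inl ⟨0, zero_mem_polarDual _, by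
        ext <;> simp [minPair_zero (hne _)]⟩
    · rintro (_ | i)
      exacts [hl, hy i]
    · simp only [Fintype.sum_option, Option.elim, Finset.sum_add_distrib, ← minPair_sum hc hne]
      linarith
    · rintro (_ | i)
      · exact subset_convexHull ℝ _ (Or.inl ⟨u, hu, rfl⟩)
      · exact subset_convexHull ℝ _ (Or.inr (Set.mem_iUnion.mpr ⟨i, rfl⟩))
  · rintro _ (⟨u, hu, rfl⟩ | hy)
    · refine ⟨(mem_dualConeV_cayleyCone_iff hc hne _).mpr fun i => by simp, ?_⟩
      rw [mem_polarDual_iff hΔ hsne, minPair_sum hc hne] at hu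
      simp only [Finset.sum_neg_distrib]
      linarith
    · obtain ⟨i, rfl⟩ := Set.mem_iUnion.mp hy
      refine ⟨(mem_dualConeV_cayleyCone_iff hc hne _).mpr fun j => ?_, by simp⟩
      rcases eq_or_ne j i with rfl | hji
      · simp [minPair_zero (hne j)]
      · simp [minPair_zero (hne j), hji]

end cayley

section projections

variable {d k : ℕ}

def dropHead : Vdk d (k+1) →ₗ[ℝ] Vdk d k where
  toFun p := (p.1, fun i => p.2 i.succ)
  map_add' _ _ := rfl
  map_smul' _ _ := rfl

@[simp]
lemma dropHead_apply (p : Vdk d (k+1)) : dropHead p = (p.1, fun i => p.2 i.succ) := rfl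

/-- The map `π` of part (ii). -/
def subHead : Vdk d (k+1) →ₗ[ℝ] Vdk d k where
  toFun p := (p.1, fun i => p.2 i.succ - p.2 0)
  map_add' _ _ := Prod.ext rfl (funext fun _ => add_sub_add_comm _ _ _ _)
  map_smul' _ _ := Prod.ext rfl (funext fun _ => (mul_sub _ _ _).symm)

@[simp]
lemma subHead_apply (p : Vdk d (k+1)) : subHead p = (p.1, fun i => p.2 i.succ - p.2 0) := rfl

lemma eq_of_dropHead_eq {y z : Vdk d (k+1)} (hsum : ∑ i, y.2 i = ∑ i, z.2 i)
    (h : dropHead y = dropHead z) : y = z := by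
  have htail : ∀ i : Fin k, y.2 i.succ = z.2 i.succ := fun i => congrFun (congrArg Prod.snd h) i
  refine Prod.ext (by simpa using congrArg Prod.fst h) (funext fun i => ?_)
  cases i using Fin.cases with
  | zero =>
    rw [Fin.sum_univ_succ, Fin.sum_univ_succ, Finset.sum_congr rfl fun i _ => htail i] at hsum
    linarith
  | succ i => exact htail i

theorem bijOn_dropHead_dualSlice (σ : Set (Vdk d (k+1))) :
    BijOn dropHead
      ((· - (((0 : Fin d → ℝ), fun _ => 1) : Vdk d (k+1))) '' dualSlice σ ((k : ℝ) + 1))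
      ((· - (((0 : Fin d → ℝ), fun _ => 1) : Vdk d k)) ''
        (((k : ℝ) + 1) • dropHead '' dualSlice σ 1)) := by
  have htarget : (· - (((0 : Fin d → ℝ), fun _ => 1) : Vdk d k)) ''
      (((k : ℝ) + 1) • dropHead '' dualSlice σ 1) =
      dropHead '' ((· - (((0 : Fin d → ℝ), fun _ => 1) : Vdk d (k+1))) ''
        dualSlice σ ((k : ℝ) + 1)) := by
    rw [← image_smul_set, smul_dualSlice_one (by positivity), image_image, image_image]
    simp only [map_sub]
    rfl
  rw [htarget]
  refine InjOn.bijOn_image ?_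
  rintro _ ⟨y, hy, rfl⟩ _ ⟨z, hz, rfl⟩ h
  rw [map_sub, map_sub, sub_left_inj] at h
  rw [eq_of_dropHead_eq (hy.2.trans hz.2.symm) h]

variable {Δ : Fin (k+1) → Set (Fin d → ℝ)}

theorem image_dualSlice_one_eq_convexHull {m : ℕ} (L : Vdk d (k+1) →ₗ[ℝ] Vdk d m)
    {w : Fin (k+1) → ℝ} (hw : 0 ≤ w) (hw1 : ∑ i, w i = 1)
    (hLw : L ((0 : Fin d → ℝ), w) = 0) (hc : ∀ i, IsCompact (Δ i))
    (hΔ : IsCompact (∑ i, Δ i)) (h0 : (0 : Fin d → ℝ) ∈ interior (∑ i, Δ i)) :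
    L '' dualSlice (cayleyCone Δ) 1 = convexHull ℝ (L '' cayleyGenerators Δ) := by
  rw [← LinearMap.image_convexHull, convexHull_cayleyGenerators hc hΔ h0]
  refine (image_mono ?_).antisymm ?_
  · exact fun y hy => ⟨hy.1, hy.2.le⟩
  rintro _ ⟨y, ⟨hy, hsum⟩, rfl⟩
  refine ⟨y + (1 - ∑ i, y.2 i) • ((0 : Fin d → ℝ), w), ?_, ?_⟩
  · refine ⟨add_mem_dualConeV hy
      (smul_mem_dualConeV (sub_nonneg.mpr hsum) (zero_prod_mem_dualConeV_cayleyCone hw)), ?_⟩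
    simp [Finset.sum_add_distrib, ← Finset.mul_sum, hw1]
  · rw [map_add, map_smul, hLw, smul_zero, add_zero]

lemma dropHead_image_cayleyGenerators (hne : ∀ i, (Δ i).Nonempty) :
    dropHead '' cayleyGenerators Δ =
      (fun u => ((u, fun i : Fin k => -(minPair (Δ i.succ) u)) : Vdk d k)) ''
          polarDual (∑ i, Δ i) ∪
        ⋃ i : Fin k, {(((0 : Fin d → ℝ), Pi.single i 1) : Vdk d k)} := by
  refine Subset.antisymm ?_ ?_
  · rintro _ ⟨_, ⟨u, hu, rfl⟩ | hy, rfl⟩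
    · exact Or.inl ⟨u, hu, rfl⟩
    obtain ⟨i, rfl⟩ := mem_iUnion.mp hy
    cases i using Fin.cases with
    | zero => exact Or.inl ⟨0, zero_mem_polarDual _, by ext <;> simp [minPair_zero (hne _)]⟩
    | succ i => exact Or.inr (mem_iUnion.mpr ⟨i, by ext <;> simp [Pi.single_apply]⟩)
  · rintro _ (⟨u, hu, rfl⟩ | hq)
    · exact ⟨_, Or.inl ⟨u, hu, rfl⟩, rfl⟩
    obtain ⟨i, rfl⟩ := mem_iUnion.mp hq
    exact ⟨_, Or.inr (mem_iUnion.mpr ⟨i.succ, rfl⟩), by ext <;> simp [Pi.single_apply]⟩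

lemma sum_mul_estar_apply (g : Fin (k+1) → ℝ) (j : Fin k) :
    ∑ i, g i * estar i j = g j.succ - g 0 := by
  simp only [estar, Fin.sum_univ_succ, Fin.cases_zero, Fin.cases_succ, Pi.single_apply, mul_ite,
    mul_neg, mul_one, mul_zero, Finset.sum_ite_eq, Finset.mem_univ, if_true]
  ring

lemma subHead_zero_single (i : Fin (k+1)) :
    subHead (((0 : Fin d → ℝ), Pi.single i 1) : Vdk d (k+1)) = ((0 : Fin d → ℝ), estar i) := by
  cases i using Fin.cases <;> ext <;> simp [estar, Pi.single_apply]

lemma subHead_image_cayleyGenerators :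
    subHead '' cayleyGenerators Δ =
      (fun u => ((u, -(∑ i : Fin (k+1), minPair (Δ i) u • estar i)) : Vdk d k)) ''
          polarDual (∑ i, Δ i) ∪
        ⋃ i : Fin (k+1), {(((0 : Fin d → ℝ), estar i) : Vdk d k)} := by
  simp only [cayleyGenerators, image_union, image_image, image_iUnion, image_singleton,
    subHead_zero_single]
  congr 2
  ext u : 1
  refine Prod.ext rfl (funext fun j => ?_)
  simp only [subHead_apply, Pi.neg_apply, Finset.sum_apply, Pi.smul_apply, smul_eq_mul,
    sum_mul_estar_apply, neg_sub]
  ring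

end projections

/-- description of the reflexive polytope `σ̄∨_{(k+1)} − n_σ̄` and of the slice
`π(σ̄∨_{(1)})` for the dual of the Cayley cone `σ̄`. -/
theorem dual_cayley_slices {d k : ℕ}
    (Δ : Fin (k+1) → Set (Fin d → ℝ))
    (hlat : ∀ i, IsLatticePolytope (Δ i))
    (hrefl : IsReflexive (∑ i, Δ i))
    -- distinguished points n_σ̄ = r₀* + ⋯ + r_k* and m_σ̄∨ = r₀ + ⋯ + r_k
    (nbar mbar : Vdk d (k+1))
    (hn : nbar = ((0 : Fin d → ℝ), fun _ => 1))
    (hm : mbar = ((0 : Fin d → ℝ), fun _ => 1))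
    -- ∇̂₀ = Conv({u − Σᵢ₌₁ᵏ min⟨Δᵢ,u⟩eᵢ* : u ∈ Δ*} ∪ {e₁*, …, e_k*}) ⊆ ℝ^d ⊕ ℝ^k
    (Q : Set (Vdk d k))
    (hQ : Q = convexHull ℝ
        ((fun u => ((u, fun i : Fin k => -(minPair (Δ i.succ) u)) : Vdk d k)) ''
            polarDual (∑ i, Δ i) ∪
          ⋃ i : Fin k, {(((0 : Fin d → ℝ), Pi.single i 1) : Vdk d k)})) :
    -- (i) (n, α₀, …, α_k) ↦ (n, α₁, …, α_k) maps σ̄∨_{(k+1)} − n_σ̄ bijectively onto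
    --     (k+1)·∇̂₀ − (e₁* + ⋯ + e_k*)
    Set.BijOn (fun p : Vdk d (k+1) => ((p.1, fun i => p.2 i.succ) : Vdk d k))
      ((fun y => y - nbar) ''
        {y ∈ dualConeV (cayleyCone Δ) | pairingV mbar y = (k : ℝ) + 1})
      ((fun y => y - (((0 : Fin d → ℝ), fun _ => 1) : Vdk d k)) '' (((k : ℝ) + 1) • Q)) ∧
    -- (ii) π(σ̄∨_{(1)}) = Conv({u − Σᵢ₌₀ᵏ min⟨Δᵢ,u⟩eᵢ* : u ∈ Δ*} ∪ {e₀*, e₁*, …, e_k*})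
    (fun p : Vdk d (k+1) => ((p.1, fun i => p.2 i.succ - p.2 0) : Vdk d k)) ''
        {y ∈ dualConeV (cayleyCone Δ) | pairingV mbar y = 1} =
      convexHull ℝ
        ((fun u => ((u, -(∑ i : Fin (k+1), minPair (Δ i) u • estar i)) : Vdk d k)) ''
            polarDual (∑ i, Δ i) ∪
          ⋃ i : Fin (k+1), {(((0 : Fin d → ℝ), estar i) : Vdk d k)}) := by
  subst hn hm hQ
  obtain ⟨hΔ, h0, -⟩ := hrefl
  have hc : ∀ i, IsCompact (Δ i) := fun i => (hlat i).isCompact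
  have hne := nonempty_of_sum_nonempty ⟨0, interior_subset h0⟩
  simp only [pairingV_zero_one]
  constructor
  · rw [← dropHead_image_cayleyGenerators hne, ← image_dualSlice_one_eq_convexHull dropHead
      (w := Pi.single 0 1) (Pi.single_nonneg.mpr zero_le_one) (by simp) (by ext <;> simp)
      hc hΔ.isCompact h0]
    exact bijOn_dropHead_dualSlice _
  · have hw1 : ∑ _ : Fin (k+1), 1 / ((k : ℝ) + 1) = 1 := by
      rw [Finset.sum_const, Finset.card_univ, Fintype.card_fin, nsmul_eq_mul]
      push_cast
      field_simp
    rw [← subHead_image_cayleyGenerators, ← image_dualSlice_one_eq_convexHull subHead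
      (w := fun _ => 1 / ((k : ℝ) + 1)) (fun _ => by positivity) hw1 (by ext <;> simp)
      hc hΔ.isCompact h0]
    rfl
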